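/- Let E be a real inner product space, p ≥ 2 an integer, σ > 0. Suppose f : E → ℝ is differentiable and σ-uniformly convex of order p, and x* satisfies f(x*) ≤ f(x) for all x. Suppose X : ℝ → E satisfies, for every t ≥ 0, that X has derivative v t at t, where v t = −‖∇f(X t)‖^{−(p−2)/(p−1)} • ∇f(X t) if ∇f(X t) ≠ 0 and v t = 0 otherwise (the p-th rescaled gradient flow). Then for every t ≥ 0: f(X t) − f(x*) ≤ (f(X 0) − f(x*)) * exp(−σ^{1/(p−1)} t). -/

import Mathlib

open Real
open scoped RealInnerProductSpace

/-!
Uniform convexity of order `p` gives, via Young's inequality with conjugate exponent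
`q = p / (p - 1)`, the gradient-domination inequality
`σ ^ (q - 1) (f x - f x*) ≤ ‖∇f x‖ ^ q / q`.
Along the rescaled gradient flow `d/dt f (X t) = -‖∇f (X t)‖ ^ q`, so the gap
`f (X t) - f x*` satisfies `φ' ≤ -σ ^ (1 / (p - 1)) φ` and Grönwall's inequality concludes.
-/

theorem Real.young_inequality_weighted_of_nonneg {a b p q σ : ℝ} (ha : 0 ≤ a) (hb : 0 ≤ b)
    (hσ : 0 < σ) (hpq : p.HolderConjugate q) :
    a * b ≤ σ * a ^ p / p + σ ^ (1 - q) * b ^ q / q := by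
  have hyoung := young_inequality_of_nonneg (mul_nonneg ha (rpow_nonneg hσ.le p⁻¹))
    (mul_nonneg hb (rpow_nonneg hσ.le (-p⁻¹))) hpq
  calc a * b = (a * σ ^ p⁻¹) * (b * σ ^ (-p⁻¹)) := by
        rw [mul_mul_mul_comm, ← rpow_add hσ, add_neg_cancel, rpow_zero, mul_one]
    _ ≤ (a * σ ^ p⁻¹) ^ p / p + (b * σ ^ (-p⁻¹)) ^ q / q := hyoung
    _ = σ * a ^ p / p + σ ^ (1 - q) * b ^ q / q := by
        rw [mul_rpow ha (rpow_nonneg hσ.le _), mul_rpow hb (rpow_nonneg hσ.le _),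
          ← rpow_mul hσ.le, ← rpow_mul hσ.le, inv_mul_cancel₀ hpq.ne_zero, rpow_one, neg_mul,
          inv_mul_eq_div, hpq.symm.div_conj_eq_sub_one, neg_sub]
        ring

section InnerProductSpace

variable {E : Type*} [NormedAddCommGroup E] [InnerProductSpace ℝ E]

theorem sub_le_norm_gradient_rpow_of_uniformly_convex [CompleteSpace E] {f : E → ℝ}
    {σ p q : ℝ} (hσ : 0 < σ) (hpq : p.HolderConjugate q)
    (hucf : ∀ a b : E, f a + ⟪gradient f a, b - a⟫ + σ / p * ‖b - a‖ ^ p ≤ f b) (x y : E) :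
    σ ^ (q - 1) * (f x - f y) ≤ ‖gradient f x‖ ^ q / q := by
  have hinner : -⟪gradient f x, y - x⟫ ≤ ‖y - x‖ * ‖gradient f x‖ :=
    (neg_le_abs _).trans ((abs_real_inner_le_norm _ _).trans_eq (mul_comm _ _))
  have hyoung := young_inequality_weighted_of_nonneg (norm_nonneg (y - x))
    (norm_nonneg (gradient f x)) hσ hpq
  have hgap : f x - f y ≤ σ ^ (1 - q) * ‖gradient f x‖ ^ q / q := by
    linarith [hucf x y, div_mul_eq_mul_div σ p (‖y - x‖ ^ p)]
  have hcancel : σ ^ (q - 1) * σ ^ (1 - q) = 1 := by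
    rw [← rpow_add hσ, sub_add_sub_cancel', sub_self, rpow_zero]
  calc σ ^ (q - 1) * (f x - f y)
      ≤ σ ^ (q - 1) * (σ ^ (1 - q) * ‖gradient f x‖ ^ q / q) :=
        mul_le_mul_of_nonneg_left hgap (rpow_nonneg hσ.le _)
    _ = ‖gradient f x‖ ^ q / q := by rw [← mul_div_assoc, ← mul_assoc, hcancel, one_mul]

theorem real_inner_rpow_norm_smul_self {g : E} (hg : g ≠ 0) (s : ℝ) :
    ⟪g, ‖g‖ ^ (s - 2) • g⟫ = ‖g‖ ^ s := by
  rw [real_inner_smul_right, real_inner_self_eq_norm_sq, ← rpow_natCast,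
    ← rpow_add (norm_pos_iff.2 hg)]
  norm_num

theorem HasGradientAt.comp_hasDerivAt [CompleteSpace E] {f : E → ℝ} {g : E} {X : ℝ → E}
    {X' : E} {t : ℝ} (hf : HasGradientAt f g (X t)) (hX : HasDerivAt X X' t) :
    HasDerivAt (fun s => f (X s)) ⟪g, X'⟫ t :=
  hf.hasFDerivAt.comp_hasDerivAt t hX

end InnerProductSpace

theorem le_mul_exp_of_hasDerivAt_le_mul {φ φ' : ℝ → ℝ} {K : ℝ}
    (hφ : ∀ t ≥ (0 : ℝ), HasDerivAt φ (φ' t) t) (hbound : ∀ t ≥ (0 : ℝ), φ' t ≤ K * φ t) :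
    ∀ t ≥ (0 : ℝ), φ t ≤ φ 0 * exp (K * t) := by
  intro t ht
  have hgronwall := le_gronwallBound_of_liminf_deriv_right_le (b := t) (ε := 0)
    (fun s hs => (hφ s hs.1).continuousAt.continuousWithinAt)
    (fun s hs _ hr => (hφ s hs.1).hasDerivWithinAt.liminf_right_slope_le hr) le_rfl
    (fun s hs => by simpa using hbound s hs.1) t ⟨ht, le_rfl⟩
  rwa [gronwallBound_ε0, sub_zero] at hgronwall

theorem rescaled_gradient_flow_uniformly_convex_rate_general
    {E : Type*} [NormedAddCommGroup E] [InnerProductSpace ℝ E] [CompleteSpace E]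
    (p : ℕ) (hp : 2 ≤ p) (σ : ℝ) (hσ : 0 < σ)
    (f : E → ℝ) (hf : Differentiable ℝ f)
    (hucf : ∀ a b : E,
      f a + ⟪gradient f a, b - a⟫ + (σ / (p : ℝ)) * ‖b - a‖ ^ p ≤ f b)
    (xstar : E)
    (X v : ℝ → E)
    (hv : ∀ t : ℝ, gradient f (X t) ≠ 0 →
      v t = -(‖gradient f (X t)‖ ^ (-(((p : ℝ) - 2) / ((p : ℝ) - 1)))) • gradient f (X t))
    (hv0 : ∀ t : ℝ, gradient f (X t) = 0 → v t = 0)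
    (hX : ∀ t ≥ (0 : ℝ), HasDerivAt X (v t) t) :
    ∀ t ≥ (0 : ℝ), f (X t) - f xstar ≤
      (f (X 0) - f xstar) * Real.exp (-(σ ^ (1 / ((p : ℝ) - 1))) * t) := by
  have hp1 : (1 : ℝ) < p := by exact_mod_cast hp
  set q : ℝ := p / (p - 1) with hq
  have hpq : (p : ℝ).HolderConjugate q := (holderConjugate_iff_eq_conjExponent hp1).2 rfl
  have hrate : 1 / ((p : ℝ) - 1) = q - 1 := by rw [hq]; field_simp [hpq.sub_one_ne_zero]; ring
  have hscale : -(((p : ℝ) - 2) / ((p : ℝ) - 1)) = q - 2 := by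
    rw [hq]; field_simp [hpq.sub_one_ne_zero]; ring
  have hdom (x : E) : σ ^ (1 / ((p : ℝ) - 1)) * (f x - f xstar) ≤ ‖gradient f x‖ ^ q := by
    rw [hrate]
    refine (sub_le_norm_gradient_rpow_of_uniformly_convex hσ hpq
      (fun a b => by simpa only [rpow_natCast] using hucf a b) x xstar).trans ?_
    exact div_le_self (rpow_nonneg (norm_nonneg _) q) hpq.symm.lt.le
  have hslope (t : ℝ) : ⟪gradient f (X t), v t⟫ = -‖gradient f (X t)‖ ^ q := by
    by_cases h0 : gradient f (X t) = 0
    · rw [hv0 t h0, inner_zero_right, h0, norm_zero, zero_rpow hpq.symm.ne_zero, neg_zero]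
    · rw [hv t h0, hscale, neg_smul, inner_neg_right, real_inner_rpow_norm_smul_self h0]
  refine le_mul_exp_of_hasDerivAt_le_mul
    (fun t ht => ((hf (X t)).hasGradientAt.comp_hasDerivAt (hX t ht)).sub_const (f xstar))
    fun t _ => ?_
  rw [hslope, neg_mul]
  linarith [hdom (X t)]

/-- Exponential convergence rate of the `p`-th rescaled gradient
flow for a `σ`-uniformly convex objective (Theorem 9 of the paper):
`f (X t) − f x* ≤ (f (X 0) − f x*) exp(−σ^{1/(p−1)} t)`. -/
theorem rescaled_gradient_flow_uniformly_convex_rate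
    {E : Type*} [NormedAddCommGroup E] [InnerProductSpace ℝ E] [CompleteSpace E]
    (p : ℕ) (hp : 2 ≤ p) (σ : ℝ) (hσ : 0 < σ)
    (f : E → ℝ) (hf : Differentiable ℝ f)
    (hucf : ∀ a b : E,
      f a + ⟪gradient f a, b - a⟫ + (σ / (p : ℝ)) * ‖b - a‖ ^ p ≤ f b)
    (xstar : E) (hmin : ∀ a, f xstar ≤ f a)
    (X v : ℝ → E)
    (hv : ∀ t : ℝ, gradient f (X t) ≠ 0 →
      v t = -(‖gradient f (X t)‖ ^ (-(((p : ℝ) - 2) / ((p : ℝ) - 1)))) • gradient f (X t))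
    (hv0 : ∀ t : ℝ, gradient f (X t) = 0 → v t = 0)
    (hX : ∀ t ≥ (0 : ℝ), HasDerivAt X (v t) t) :
    ∀ t ≥ (0 : ℝ), f (X t) - f xstar ≤
      (f (X 0) - f xstar) * Real.exp (-(σ ^ (1 / ((p : ℝ) - 1))) * t) :=
  rescaled_gradient_flow_uniformly_convex_rate_general p hp σ hσ f hf hucf xstar X v hv hv0 hX
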